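/- arXiv:2506.21637 — 2 statements merged into one kernel-verified Lean document; each statement's English description precedes it below -/
import Mathlib

section
/- Given J ⊆ ℤ/fℤ, define J^Θ = {i ∉ J₀ : i ∈ J} ∪ {i ∈ J₀ : ν(i) ∉ J}, and set s^Θ = s(b^Θ,J^Θ), s = s(b,J), t^Θ = t(b^Θ,J^Θ), t = t(b,J). Then for every i ∈ ℤ/fℤ: A_i(s^Θ, s) = p^f − 1 if (i ∈ M̃ and i ∉ J^Θ) or (i ∈ J₀ and i ∈ J^Θ and i+1 ∈ J₀), and A_i(s^Θ, s) = 0 otherwise; and A_i(t^Θ, t) = p^f − 1 if (i ∈ M̃ and i ∈ J^Θ) or (i ∈ J₀ and i ∉ J^Θ and i+1 ∈ J₀), and A_i(t^Θ, t) = 0 otherwise. -/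
open scoped Classical
noncomputable section

/-- `Σ(v) = Σ_{i=0}^{f−1} v_i · p^{f−1−i}`. -/
def Sig (p f : ℕ) (v : ZMod f → ℤ) : ℤ :=
  ∑ i ∈ Finset.range f, v (i : ZMod f) * (p : ℤ) ^ (f - 1 - i)

/-- `A_i(c,d) = Σ_{j=1}^{f} p^{f−j} · (c_{i+j} − d_{i+j})`. -/
def Ai (p f : ℕ) (c d : ZMod f → ℤ) (i : ZMod f) : ℤ :=
  ∑ j ∈ Finset.Icc 1 f, (p : ℤ) ^ (f - j) * (c (i + (j : ZMod f)) - d (i + (j : ZMod f)))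

/-- `T_ν`: the maximal run of indices with `k`-value 1 following `ν`. -/
def Trun (f : ℕ) (k : ZMod f → ℤ) (ν : ZMod f) : Set (ZMod f) :=
  {i | ∃ s : ℕ, 1 ≤ s ∧ i = ν + (s : ZMod f) ∧
        ∀ j : ℕ, 1 ≤ j → j ≤ s → k (ν + (j : ZMod f)) = 1}

/-- `b_{i,1} = k_i − 1`. -/
def b1 (f : ℕ) (k : ZMod f → ℤ) : ZMod f → ℤ := fun i => k i - 1

/-- the constantly zero second component. -/
def zero2 (f : ℕ) : ZMod f → ℤ := fun _ => 0

/-- `b′_{i,1}`. -/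
def bp1 (p f : ℕ) (k : ZMod f → ℤ) : ZMod f → ℤ := fun i =>
  if k i = 1 then (if k (i + 1) = 1 then (p : ℤ) - 1 else (p : ℤ))
  else (if k (i + 1) = 1 then k i - 2 else k i - 1)

/-- `b^μ_{i,1}`. -/
def bmu1 (p f : ℕ) (k : ZMod f → ℤ) (μ : ZMod f) : ZMod f → ℤ := fun i =>
  if i = μ then k μ - 1 else bp1 p f k i

/-- `b^μ_{i,2}`. -/
def bmu2 (f : ℕ) (μ : ZMod f) : ZMod f → ℤ := fun i => if i = μ then -1 else 0

/-- `b^Θ_{i,1}`. -/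
def bth1 (p f : ℕ) (k : ZMod f → ℤ) : ZMod f → ℤ := fun i =>
  if k i = 1 then (if k (i + 1) = 1 then (p : ℤ) - 1 else (p : ℤ)) else k i - 1

/-- `b^Θ_{i,2}`. -/
def bth2 (f : ℕ) (k : ZMod f → ℤ) : ZMod f → ℤ := fun i =>
  if k i ≠ 1 ∧ k (i + 1) = 1 then -1 else 0

/-- `s_i(c,S) = c_{i,1}` if `i ∈ S`, else `c_{i,2}`. -/
def sW (f : ℕ) (c1 c2 : ZMod f → ℤ) (S : Set (ZMod f)) : ZMod f → ℤ :=
  fun i => if i ∈ S then c1 i else c2 i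

/-- `t_i(c,S) = c_{i,2}` if `i ∈ S`, else `c_{i,1}`. -/
def tW (f : ℕ) (c1 c2 : ZMod f → ℤ) (S : Set (ZMod f)) : ZMod f → ℤ :=
  fun i => if i ∈ S then c2 i else c1 i

/-- The set `𝒫′` of Definition 3.7 of the paper. -/
def memP' (p f : ℕ) (r : ZMod f → ℤ) : Prop :=
  (∀ i, r i = 0 ∨ r i = 1 ∨ r i = (p : ℤ) - 1 ∨ r i = (p : ℤ)) ∧
  (∀ i, r i = (p : ℤ) → (r (i + 1) = 0 ∨ r (i + 1) = 1)) ∧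
  (∀ i, (r i = 1 ∨ r i = (p : ℤ) - 1) → (r (i + 1) = (p : ℤ) - 1 ∨ r (i + 1) = (p : ℤ))) ∧
  (∀ i, r i = 0 →
    ((∀ j, r j = 0) ∨
      ∃ s t : ℕ, 1 ≤ s ∧ 1 ≤ t ∧
        (∀ j : ℕ, 1 ≤ j → j ≤ s - 1 → r (i + (j : ZMod f)) = 0) ∧
        r (i + (s : ZMod f)) = 1 ∧
        (∀ j : ℕ, 1 ≤ j → j ≤ t - 1 → r (i - (j : ZMod f)) = 0) ∧
        r (i - (t : ZMod f)) = (p : ℤ)))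

/-- The exceptional case of Theorem 3.9 of the paper. -/
def Exceptional (p f : ℕ) (r : ZMod f → ℤ) (J : Set (ZMod f)) : Prop :=
  memP' p f r ∧ (∀ i, (r i = (p : ℤ) - 1 ∨ r i = (p : ℤ)) → i ∈ J) ∧
    (∀ i, r i = 1 → i ∉ J)

/-- indicator for the `s`-side condition -/
def gS (p f : ℕ) (k : ZMod f → ℤ) (JTh : Set (ZMod f)) : ZMod f → ℤ := fun i =>
  if ((k i ≠ 1 ∧ k (i + 1) = 1) ∧ i ∉ JTh) ∨ (k i = 1 ∧ i ∈ JTh ∧ k (i + 1) = 1)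
  then 1 else 0

/-- indicator for the `t`-side condition -/
def gT (p f : ℕ) (k : ZMod f → ℤ) (JTh : Set (ZMod f)) : ZMod f → ℤ := fun i =>
  if ((k i ≠ 1 ∧ k (i + 1) = 1) ∧ i ∈ JTh) ∨ (k i = 1 ∧ i ∉ JTh ∧ k (i + 1) = 1)
  then 1 else 0

private lemma trun_unique_aux {f : ℕ} (k : ZMod f → ℤ) {ν ν' i : ZMod f}
    {s t : ℕ} (hν : k ν ≠ 1) (hst : s ≤ t)
    (hsi : i = ν + (s : ZMod f)) (hti : i = ν' + (t : ZMod f))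
    (htk : ∀ j : ℕ, 1 ≤ j → j ≤ t → k (ν' + (j : ZMod f)) = 1) : ν = ν' := by
  have h : ν + (s : ZMod f) = ν' + (t : ZMod f) := hsi.symm.trans hti
  have hc : ((t - s : ℕ) : ZMod f) = (t : ZMod f) - (s : ZMod f) := Nat.cast_sub hst
  have hd : ν = ν' + ((t - s : ℕ) : ZMod f) := by
    rw [hc]; linear_combination h
  by_cases h0 : t - s = 0
  · have hts : t ≤ s := Nat.sub_eq_zero_iff_le.mp h0
    have : s = t := le_antisymm hst hts
    subst this
    exact add_right_cancel h
  · exact absurd (hd ▸ htk (t - s) (Nat.one_le_iff_ne_zero.mpr h0) (Nat.sub_le t s)) hν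

private lemma trun_unique {f : ℕ} (k : ZMod f → ℤ) {ν ν' i : ZMod f}
    (hν : k ν ≠ 1) (hν' : k ν' ≠ 1)
    (h1 : i ∈ Trun f k ν) (h2 : i ∈ Trun f k ν') : ν = ν' := by
  obtain ⟨s, hs1, hsi, hsk⟩ := h1
  obtain ⟨t, ht1, hti, htk⟩ := h2
  rcases le_total s t with hle | hle
  · exact trun_unique_aux k hν hle hsi hti htk
  · exact (trun_unique_aux k hν' hle hti hsi hsk).symm

private lemma key_sum (p f : ℕ) (c d g : ZMod f → ℤ)
    (h : ∀ i : ZMod f, c (i + 1) - d (i + 1) = (p : ℤ) * g i - g (i + 1)) (i : ZMod f) :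
    Ai p f c d i = ((p : ℤ) ^ f - 1) * g i := by
  have hIcc : Ai p f c d i
      = ∑ m ∈ Finset.range f, (p : ℤ) ^ (f - (1 + m)) *
          (c (i + ((1 + m : ℕ) : ZMod f)) - d (i + ((1 + m : ℕ) : ZMod f))) := by
    rw [Ai, ← Finset.Ico_add_one_right_eq_Icc, Finset.sum_Ico_eq_sum_range]
    simp
  rw [hIcc]
  have hstep : ∀ m ∈ Finset.range f,
      (p : ℤ) ^ (f - (1 + m)) * (c (i + ((1 + m : ℕ) : ZMod f)) - d (i + ((1 + m : ℕ) : ZMod f)))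
        = (fun m : ℕ => (p : ℤ) ^ (f - m) * g (i + (m : ZMod f))) m
          - (fun m : ℕ => (p : ℤ) ^ (f - m) * g (i + (m : ZMod f))) (m + 1) := by
    intro m hm
    have hm' : m < f := Finset.mem_range.mp hm
    have hcast : ((1 + m : ℕ) : ZMod f) = (m : ZMod f) + 1 := by push_cast; ring
    have hcast2 : ((m + 1 : ℕ) : ZMod f) = (m : ZMod f) + 1 := by push_cast; ring
    have h2 := h (i + (m : ZMod f))
    have heq : i + ((m : ZMod f) + 1) = (i + (m : ZMod f)) + 1 := by ring
    simp only [hcast, hcast2, heq, h2]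
    have hpow : (p : ℤ) ^ (f - m) = (p : ℤ) ^ (f - (1 + m)) * p := by
      rw [← pow_succ]
      congr 1
      omega
    have hpe : f - (m + 1) = f - (1 + m) := by omega
    rw [hpow, hpe]
    ring
  rw [Finset.sum_congr rfl hstep,
    Finset.sum_range_sub' (fun m : ℕ => (p : ℤ) ^ (f - m) * g (i + (m : ZMod f))) f]
  simp [ZMod.natCast_self]
  ring

/-- Third part of Lemma A.4 of the paper: the values of `A_i(s^Θ, s)` and `A_i(t^Θ, t)` for
the subset `J^Θ` derived from `J` via `ν(·)`. -/
theorem stmt15 (p f : ℕ) (hp : p.Prime) (hodd : Odd p) (hf : 1 ≤ f)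
    (k : ZMod f → ℤ)
    (hk : ∀ i, 1 ≤ k i ∧ k i ≤ (p : ℤ))
    (hone : ∃ i, k i = 1) (hnotone : ∃ i, k i ≠ 1)
    (h21 : ∀ i, ¬(k i = 2 ∧ k (i + 1) = 1))
    (nu : ZMod f → ZMod f)
    (hnu : ∀ i, k i = 1 → ((k (nu i) ≠ 1 ∧ k (nu i + 1) = 1) ∧ i ∈ Trun f k (nu i)))
    (J JTh : Set (ZMod f))
    (hJTh : ∀ i, i ∈ JTh ↔ ((k i ≠ 1 ∧ i ∈ J) ∨ (k i = 1 ∧ nu i ∉ J))) :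
    ∀ i : ZMod f,
      Ai p f (sW f (bth1 p f k) (bth2 f k) JTh) (sW f (b1 f k) (zero2 f) J) i
        = (if ((k i ≠ 1 ∧ k (i + 1) = 1) ∧ i ∉ JTh) ∨ (k i = 1 ∧ i ∈ JTh ∧ k (i + 1) = 1)
            then (p : ℤ) ^ f - 1 else 0) ∧
      Ai p f (tW f (bth1 p f k) (bth2 f k) JTh) (tW f (b1 f k) (zero2 f) J) i
        = (if ((k i ≠ 1 ∧ k (i + 1) = 1) ∧ i ∈ JTh) ∨ (k i = 1 ∧ i ∉ JTh ∧ k (i + 1) = 1)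
            then (p : ℤ) ^ f - 1 else 0) := by
  -- membership relations
  have LC : ∀ i : ZMod f, k i ≠ 1 → (i ∈ JTh ↔ i ∈ J) := by
    intro i hi
    rw [hJTh]
    simp [hi]
  have LA : ∀ i : ZMod f, k i ≠ 1 → k (i + 1) = 1 → ((i + 1) ∈ JTh ↔ i ∉ JTh) := by
    intro i hi h1
    have h := hnu (i + 1) h1
    have hmem : (i + 1) ∈ Trun f k i := by
      refine ⟨1, le_refl 1, by norm_num, ?_⟩
      intro j hj1 hj2
      have : j = 1 := le_antisymm hj2 hj1
      subst this
      simpa using h1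
    have he : nu (i + 1) = i := trun_unique k h.1.1 hi h.2 hmem
    rw [hJTh]
    simp [h1, he, LC i hi]
  have LB : ∀ i : ZMod f, k i = 1 → k (i + 1) = 1 → ((i + 1) ∈ JTh ↔ i ∈ JTh) := by
    intro i hi h1
    have h := hnu i hi
    obtain ⟨s, hs1, hsi, hsk⟩ := h.2
    have hiplus : i + 1 = nu i + ((s + 1 : ℕ) : ZMod f) := by
      conv_lhs => rw [hsi]
      push_cast
      ring
    have hmem : (i + 1) ∈ Trun f k (nu i) := by
      refine ⟨s + 1, by omega, hiplus, ?_⟩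
      intro j hj1 hj2
      rcases Nat.lt_or_ge j (s + 1) with h' | h'
      · exact hsk j hj1 (by omega)
      · have : j = s + 1 := by omega
        subst this
        rw [← hiplus]
        exact h1
    have h2 := hnu (i + 1) h1
    have he : nu (i + 1) = nu i := trun_unique k h2.1.1 h.1.1 h2.2 hmem
    rw [hJTh (i + 1), hJTh i]
    simp [h1, hi, he]
  -- the pointwise identities
  have hdelS : ∀ i : ZMod f,
      sW f (bth1 p f k) (bth2 f k) JTh (i + 1) - sW f (b1 f k) (zero2 f) J (i + 1)
        = (p : ℤ) * gS p f k JTh i - gS p f k JTh (i + 1) := by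
    intro i
    by_cases K1 : k (i + 1) = 1
    · by_cases K0 : k i = 1
      · have hC := LB i K0 K1
        by_cases a1 : i ∈ JTh <;> by_cases K2 : k (i + 1 + 1) = 1 <;>
          simp_all [gS, sW, bth1, bth2, b1, zero2] <;> ring
      · have hC := LA i K0 K1
        by_cases a1 : i ∈ JTh <;> by_cases K2 : k (i + 1 + 1) = 1 <;>
          simp_all [gS, sW, bth1, bth2, b1, zero2] <;> ring
    · have hC := LC (i + 1) K1
      by_cases b : (i + 1) ∈ JTh <;> by_cases K2 : k (i + 1 + 1) = 1 <;>
        simp_all [gS, sW, bth1, bth2, b1, zero2] <;> ring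
  have hdelT : ∀ i : ZMod f,
      tW f (bth1 p f k) (bth2 f k) JTh (i + 1) - tW f (b1 f k) (zero2 f) J (i + 1)
        = (p : ℤ) * gT p f k JTh i - gT p f k JTh (i + 1) := by
    intro i
    by_cases K1 : k (i + 1) = 1
    · by_cases K0 : k i = 1
      · have hC := LB i K0 K1
        by_cases a1 : i ∈ JTh <;> by_cases K2 : k (i + 1 + 1) = 1 <;>
          simp_all [gT, tW, bth1, bth2, b1, zero2] <;> ring
      · have hC := LA i K0 K1
        by_cases a1 : i ∈ JTh <;> by_cases K2 : k (i + 1 + 1) = 1 <;>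
          simp_all [gT, tW, bth1, bth2, b1, zero2] <;> ring
    · have hC := LC (i + 1) K1
      by_cases b : (i + 1) ∈ JTh <;> by_cases K2 : k (i + 1 + 1) = 1 <;>
        simp_all [gT, tW, bth1, bth2, b1, zero2] <;> ring
  intro i
  constructor
  · rw [key_sum p f _ _ (gS p f k JTh) hdelS i]
    by_cases hc : ((k i ≠ 1 ∧ k (i + 1) = 1) ∧ i ∉ JTh) ∨ (k i = 1 ∧ i ∈ JTh ∧ k (i + 1) = 1) <;>
      simp [gS, hc]
  · rw [key_sum p f _ _ (gT p f k JTh) hdelT i]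
    by_cases hc : ((k i ≠ 1 ∧ k (i + 1) = 1) ∧ i ∈ JTh) ∨ (k i = 1 ∧ i ∉ JTh ∧ k (i + 1) = 1) <;>
      simp [gT, hc]
end
end

section
/- Let μ ∈ M̃ and suppose J′, J^μ ⊆ ℤ/fℤ satisfy: μ ∈ J′; T_μ ⊆ J′; T_μ ∩ J^μ = ∅; and i ∈ J′ ⟺ i ∈ J^μ for all i ∉ T_μ. Set s′ = s(b′,J′), s^μ = s(b^μ,J^μ), t′ = t(b′,J′), t^μ = t(b^μ,J^μ). Then for every i ∈ ℤ/fℤ: A_i(s′, s^μ) = p^f − 1 if i = μ or (i ∈ T_μ and i+1 ∈ J₀), and A_i(s′, s^μ) = 0 otherwise; likewise A_i(t^μ, t′) = p^f − 1 if i = μ or (i ∈ T_μ and i+1 ∈ J₀), and A_i(t^μ, t′) = 0 otherwise. -/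
/-!
Let `g` be the indicator function of `T_μ`. Pointwise, both `s′ - s^μ` and `t^μ - t′` equal
`p * g x - g (x + 1)` (the two differences agree because `b^μ_{·,1} + b^μ_{·,2} = b′_{·,1}`), so
each `A_i` telescopes around the cycle to `(p^f - 1) * g (i + 1)`. Finally `i + 1 ∈ T_μ` exactly
when `i = μ`, or `i ∈ T_μ` and the run continues, i.e. `k_{i+1} = 1`.
-/

open scoped Classical
noncomputable section

theorem Ai_eq_of_sub_eq (p f : ℕ) {c d g : ZMod f → ℤ}
    (h : ∀ x, c x - d x = (p : ℤ) * g x - g (x + 1)) (i : ZMod f) :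
    Ai p f c d i = ((p : ℤ) ^ f - 1) * g (i + 1) := by
  set G : ℕ → ℤ := fun n => (p : ℤ) ^ (f - n) * g (i + 1 + n)
  have hterm : ∀ m ∈ Finset.range f, (p : ℤ) ^ (f - (1 + m)) *
      (c (i + ((1 + m : ℕ) : ZMod f)) - d (i + ((1 + m : ℕ) : ZMod f))) = G m - G (m + 1) := by
    intro m hm
    have hfm : f - m = f - (1 + m) + 1 := by have := Finset.mem_range.mp hm; omega
    simp only [G, h, hfm, pow_succ]
    push_cast
    ring_nf
  rw [Ai, ← Finset.Ico_add_one_right_eq_Icc, Finset.sum_Ico_eq_sum_range, Nat.add_sub_cancel,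
    Finset.sum_congr rfl hterm, Finset.sum_range_sub']
  simp only [G, Nat.sub_zero, Nat.cast_zero, add_zero, Nat.sub_self, pow_zero, one_mul,
    ZMod.natCast_self]
  ring

theorem sW_add_tW (f : ℕ) (c₁ c₂ : ZMod f → ℤ) (S : Set (ZMod f)) (x : ZMod f) :
    sW f c₁ c₂ S x + tW f c₁ c₂ S x = c₁ x + c₂ x := by
  unfold sW tW
  split_ifs <;> ring

theorem bmu1_add_bmu2 (p f : ℕ) {k : ZMod f → ℤ} {μ : ZMod f} (hμ : k μ ≠ 1 ∧ k (μ + 1) = 1)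
    (x : ZMod f) : bmu1 p f k μ x + bmu2 f μ x = bp1 p f k x := by
  by_cases hx : x = μ
  · subst hx
    simp only [bmu1, bmu2, bp1, if_true, hμ.1, hμ.2, if_false]
    ring
  · simp [bmu1, bmu2, hx]

theorem tW_sub_tW_eq_sW_sub_sW (p f : ℕ) {k : ZMod f → ℤ} {μ : ZMod f}
    (hμ : k μ ≠ 1 ∧ k (μ + 1) = 1) (J' Jμ : Set (ZMod f)) (x : ZMod f) :
    tW f (bmu1 p f k μ) (bmu2 f μ) Jμ x - tW f (bp1 p f k) (zero2 f) J' x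
      = sW f (bp1 p f k) (zero2 f) J' x - sW f (bmu1 p f k μ) (bmu2 f μ) Jμ x := by
  have h' := sW_add_tW f (bp1 p f k) (zero2 f) J' x
  have hμ' := sW_add_tW f (bmu1 p f k μ) (bmu2 f μ) Jμ x
  have hb := bmu1_add_bmu2 p f hμ x
  simp only [zero2] at h'
  linarith

section Trun

variable {f : ℕ} {k : ZMod f → ℤ} {ν x : ZMod f}

theorem eq_one_of_mem_Trun (hx : x ∈ Trun f k ν) : k x = 1 := by
  obtain ⟨s, hs, rfl, hrun⟩ := hx
  exact hrun s hs le_rfl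

theorem add_one_mem_Trun_iff (hν : k (ν + 1) = 1) :
    x + 1 ∈ Trun f k ν ↔ x = ν ∨ (x ∈ Trun f k ν ∧ k (x + 1) = 1) := by
  constructor
  · rintro ⟨s, hs, hx, hrun⟩
    obtain rfl | ⟨t, ht, rfl⟩ : s = 1 ∨ ∃ t, 1 ≤ t ∧ s = t + 1 := by
      rcases eq_or_lt_of_le hs with h | h
      · exact .inl h.symm
      · exact .inr ⟨s - 1, by omega, by omega⟩
    · left
      simpa using hx
    · right
      have hxt : x = ν + (t : ZMod f) := by push_cast at hx; linear_combination hx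
      refine ⟨⟨t, ht, hxt, fun j hj hjt => hrun j hj (by omega)⟩, ?_⟩
      rw [hx]
      exact hrun (t + 1) hs le_rfl
  · rintro (rfl | ⟨⟨s, hs, rfl, hrun⟩, hk⟩)
    · refine ⟨1, le_rfl, by simp, fun j hj hj1 => ?_⟩
      obtain rfl : j = 1 := by omega
      simpa using hν
    · refine ⟨s + 1, by omega, by push_cast; ring, fun j hj hjs => ?_⟩
      rcases Nat.lt_or_ge s j with hsj | hjs'
      · obtain rfl : j = s + 1 := by omega
        simpa [add_assoc] using hk
      · exact hrun j hj hjs'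

end Trun

theorem sW_sub_sW_eq_indicator (p f : ℕ) (k : ZMod f → ℤ) (μ : ZMod f)
    (hμ : k μ ≠ 1 ∧ k (μ + 1) = 1) (J' Jμ : Set (ZMod f))
    (hμJ' : μ ∈ J') (hT1 : Trun f k μ ⊆ J') (hT2 : Trun f k μ ∩ Jμ = ∅)
    (hagree : ∀ i, i ∉ Trun f k μ → (i ∈ J' ↔ i ∈ Jμ)) (x : ZMod f) :
    sW f (bp1 p f k) (zero2 f) J' x - sW f (bmu1 p f k μ) (bmu2 f μ) Jμ x
      = (p : ℤ) * (Trun f k μ).indicator 1 x - (Trun f k μ).indicator 1 (x + 1) := by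
  by_cases hxT : x ∈ Trun f k μ
  · have hxμ : x ≠ μ := by rintro rfl; exact hμ.1 (eq_one_of_mem_Trun hxT)
    have hxJμ : x ∉ Jμ := fun h => (Set.eq_empty_iff_forall_notMem.mp hT2 x) ⟨hxT, h⟩
    have hx1 : x + 1 ∈ Trun f k μ ↔ k (x + 1) = 1 := by
      simp [add_one_mem_Trun_iff hμ.2, hxT, hxμ]
    simp only [sW, if_pos (hT1 hxT), if_neg hxJμ, bp1, bmu2, zero2, if_neg hxμ,
      eq_one_of_mem_Trun hxT, Set.indicator, hxT, hx1]
    split_ifs <;> simp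
  · have hx1 : x + 1 ∈ Trun f k μ ↔ x = μ := by simp [add_one_mem_Trun_iff hμ.2, hxT]
    simp only [sW, ← hagree x hxT, bmu1, bmu2, zero2, Set.indicator, hxT, hx1]
    by_cases hxμ : x = μ
    · subst hxμ
      simp [hμJ', bp1, hμ.1, hμ.2]
    · split_ifs <;> simp_all

theorem stmt16_general (p f : ℕ)
    (k : ZMod f → ℤ)
    (μ : ZMod f) (hμ : k μ ≠ 1 ∧ k (μ + 1) = 1)
    (J' Jμ : Set (ZMod f))
    (hμJ' : μ ∈ J') (hT1 : Trun f k μ ⊆ J') (hT2 : Trun f k μ ∩ Jμ = ∅)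
    (hagree : ∀ i, i ∉ Trun f k μ → (i ∈ J' ↔ i ∈ Jμ)) :
    ∀ i : ZMod f,
      Ai p f (sW f (bp1 p f k) (zero2 f) J') (sW f (bmu1 p f k μ) (bmu2 f μ) Jμ) i
        = (if i = μ ∨ (i ∈ Trun f k μ ∧ k (i + 1) = 1)
            then (p : ℤ) ^ f - 1 else 0) ∧
      Ai p f (tW f (bmu1 p f k μ) (bmu2 f μ) Jμ) (tW f (bp1 p f k) (zero2 f) J') i
        = (if i = μ ∨ (i ∈ Trun f k μ ∧ k (i + 1) = 1)
            then (p : ℤ) ^ f - 1 else 0) := by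
  intro i
  have hs := sW_sub_sW_eq_indicator p f k μ hμ J' Jμ hμJ' hT1 hT2 hagree
  have ht : ∀ x, _ = _ := fun x => (tW_sub_tW_eq_sW_sub_sW p f hμ J' Jμ x).trans (hs x)
  have hvalue : ((p : ℤ) ^ f - 1) * (Trun f k μ).indicator 1 (i + 1)
      = if i = μ ∨ (i ∈ Trun f k μ ∧ k (i + 1) = 1) then (p : ℤ) ^ f - 1 else 0 := by
    rw [Set.indicator_apply, add_one_mem_Trun_iff hμ.2]
    split_ifs <;> simp
  exact ⟨(Ai_eq_of_sub_eq p f hs i).trans hvalue, (Ai_eq_of_sub_eq p f ht i).trans hvalue⟩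

/-- Lemma A.6 of the paper: the values of `A_i(s′, s^μ)` and `A_i(t^μ, t′)` when `μ ∈ J′`,
`T_μ ⊆ J′`, `T_μ ∩ J^μ = ∅` and `J′`, `J^μ` agree outside `T_μ`. -/
theorem stmt16 (p f : ℕ) (hp : p.Prime) (hodd : Odd p) (hf : 1 ≤ f)
    (k : ZMod f → ℤ)
    (hk : ∀ i, 1 ≤ k i ∧ k i ≤ (p : ℤ))
    (hone : ∃ i, k i = 1) (hnotone : ∃ i, k i ≠ 1)
    (h21 : ∀ i, ¬(k i = 2 ∧ k (i + 1) = 1))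
    (μ : ZMod f) (hμ : k μ ≠ 1 ∧ k (μ + 1) = 1)
    (J' Jμ : Set (ZMod f))
    (hμJ' : μ ∈ J') (hT1 : Trun f k μ ⊆ J') (hT2 : Trun f k μ ∩ Jμ = ∅)
    (hagree : ∀ i, i ∉ Trun f k μ → (i ∈ J' ↔ i ∈ Jμ)) :
    ∀ i : ZMod f,
      Ai p f (sW f (bp1 p f k) (zero2 f) J') (sW f (bmu1 p f k μ) (bmu2 f μ) Jμ) i
        = (if i = μ ∨ (i ∈ Trun f k μ ∧ k (i + 1) = 1)
            then (p : ℤ) ^ f - 1 else 0) ∧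
      Ai p f (tW f (bmu1 p f k μ) (bmu2 f μ) Jμ) (tW f (bp1 p f k) (zero2 f) J') i
        = (if i = μ ∨ (i ∈ Trun f k μ ∧ k (i + 1) = 1)
            then (p : ℤ) ^ f - 1 else 0) :=
  stmt16_general p f k μ hμ J' Jμ hμJ' hT1 hT2 hagree
end
end
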